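/- In the noisy ordered pairwise comparison model with parameters k ∈ ℕ and p ∈ [0, 1], the variance of S = X_i − X_j equals kp(1 − p)(3 + 4p²). -/

import Mathlib

open MeasureTheory ProbabilityTheory

/-- The joint distribution of the follower counts `(X_i, X_j)` of the higher-quality
creator `CC_i` and the lower-quality creator `CC_j` in the noisy ordered pairwise
comparison model with group size `k` and signal `p ∈ [0, 1]`:
draw `x ~ Binomial(k, p)` (followers of `CC_i` from the `(i, j)` group at step 1);
independently draw `b₁ ~ Binomial(k, p)`, `b₂ ~ Binomial(k, p)`, `c ~ Binomial(x, 1 − p)`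
and `d ~ Binomial(k − x, p)`; set `X_i = b₁ + x` and `X_j = b₂ + c + d`. -/
noncomputable def noisyPair (k : ℕ) (p : ℝ) (hp0 : 0 ≤ p) (hp1 : p ≤ 1) : PMF (ℕ × ℕ) :=
  (PMF.binomial (Real.toNNReal p) (Real.toNNReal_le_one.mpr hp1) k).bind fun x =>
  (PMF.binomial (Real.toNNReal p) (Real.toNNReal_le_one.mpr hp1) k).bind fun b₁ =>
  (PMF.binomial (Real.toNNReal p) (Real.toNNReal_le_one.mpr hp1) k).bind fun b₂ =>
  (PMF.binomial (1 - Real.toNNReal p) tsub_le_self (x : ℕ)).bind fun c =>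
  (PMF.binomial (Real.toNNReal p) (Real.toNNReal_le_one.mpr hp1) (k - (x : ℕ))).map fun d =>
  ((b₁ : ℕ) + (x : ℕ), (b₂ : ℕ) + (c : ℕ) + (d : ℕ))

/-!
Condition successively on `x`, `b₁`, `b₂`, `c` and `d`. At each stage the conditional mean of
`S = X_i - X_j` is affine in the next binomial variable and its conditional variance does not
depend on it, so the law of total variance together with the binomial mean `nq` and variance
`nq(1 - q)` passes the pair (mean, variance) up one level. Given `x`, the conditional mean is
`(2x - k)p` and the conditional variance is `3kp(1 - p)`; averaging over `x` adds
`(2p)² · kp(1 - p)`.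
-/

set_option linter.deprecated false

section

variable {Ω : Type*} [MeasurableSpace Ω]

def HasMeanVariance (X : Ω → ℝ) (μ : Measure Ω) (m v : ℝ) : Prop :=
  MemLp X 2 μ ∧ μ[X] = m ∧ Var[X; μ] = v

lemma HasMeanVariance.of_eq {X : Ω → ℝ} {μ : Measure Ω} {m v m' v' : ℝ}
    (h : HasMeanVariance X μ m v) (hm : m = m') (hv : v = v') : HasMeanVariance X μ m' v' :=
  hm ▸ hv ▸ h

end

namespace PMF

variable {α β : Type*} [MeasurableSpace β]

lemma toMeasure_bind_eq_sum [Fintype α] (P : PMF α) (f : α → PMF β) :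
    (P.bind f).toMeasure = ∑ a, P a • (f a).toMeasure := by
  ext s hs
  simp [toMeasure_bind_apply _ _ _ hs]

lemma integral_bind [Fintype α] [MeasurableSpace α] [MeasurableSingletonClass α]
    (P : PMF α) (f : α → PMF β) {Y : β → ℝ} (hY : ∀ a, Integrable Y (f a).toMeasure) :
    ∫ b, Y b ∂(P.bind f).toMeasure = ∫ a, ∫ b, Y b ∂(f a).toMeasure ∂P.toMeasure := by
  rw [toMeasure_bind_eq_sum, integral_finsetSum_measure fun a _ =>
    (hY a).smul_measure (P.apply_ne_top a), P.integral_eq_sum]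
  simp [integral_smul_measure]

lemma toReal_binomial_apply (q : NNReal) (hq : q ≤ 1) (n : ℕ) (i : Fin (n + 1)) :
    (binomial q hq n i).toReal = (bernsteinPolynomial ℝ n i).eval (q : ℝ) := by
  simp [binomial_apply, bernsteinPolynomial, ENNReal.toReal_sub_of_le, hq]
  ring

lemma integral_binomial (q : NNReal) (hq : q ≤ 1) (n : ℕ) (Y : ℕ → ℝ) :
    ∫ i, Y i ∂(binomial q hq n).toMeasure
      = ∑ ν ∈ Finset.range (n + 1), (bernsteinPolynomial ℝ n ν).eval (q : ℝ) * Y ν := by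
  rw [integral_eq_sum,
    ← Fin.sum_univ_eq_sum_range fun ν => (bernsteinPolynomial ℝ n ν).eval (q : ℝ) * Y ν]
  simp [toReal_binomial_apply]

lemma integral_binomial_val (q : NNReal) (hq : q ≤ 1) (n : ℕ) :
    ∫ i, ((i : ℕ) : ℝ) ∂(binomial q hq n).toMeasure = n * q := by
  have h := congr_arg (Polynomial.eval (q : ℝ)) (bernsteinPolynomial.sum_smul ℝ n)
  simp only [Polynomial.eval_finset_sum, nsmul_eq_mul, Polynomial.eval_mul,
    Polynomial.eval_natCast, Polynomial.eval_X] at h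
  rw [integral_binomial q hq n (fun ν => ν), ← h]
  simp only [mul_comm]

lemma variance_binomial_val (q : NNReal) (hq : q ≤ 1) (n : ℕ) :
    Var[fun i : Fin (n + 1) => ((i : ℕ) : ℝ); (binomial q hq n).toMeasure]
      = n * q * (1 - q) := by
  have h := congr_arg (Polynomial.eval (q : ℝ)) (bernsteinPolynomial.variance ℝ n)
  simp only [Polynomial.eval_finset_sum, Polynomial.eval_mul, Polynomial.eval_pow,
    Polynomial.eval_sub, nsmul_eq_mul, Polynomial.eval_X, Polynomial.eval_natCast,
    Polynomial.eval_one] at h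
  rw [variance_eq_integral .of_discrete, integral_binomial_val,
    integral_binomial q hq n (fun ν => (ν - n * q) ^ 2), ← h]
  exact Finset.sum_congr rfl fun ν _ => by ring

end PMF

section

variable {α β : Type*} [MeasurableSpace β] [Countable β] [MeasurableSingletonClass β]
  {X : β → ℝ}

theorem HasMeanVariance.pmf_pure (b : β) : HasMeanVariance X (PMF.pure b).toMeasure (X b) 0 := by
  rw [PMF.toMeasure_pure]
  exact ⟨(memLp_two_iff_integrable_sq .of_discrete).2 (integrable_dirac (by simp)),
    integral_dirac _ _, variance_dirac b⟩

theorem HasMeanVariance.pmf_bind [Fintype α] [MeasurableSpace α] [MeasurableSingletonClass α]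
    {P : PMF α} {f : α → PMF β} {m v : α → ℝ}
    (h : ∀ a, HasMeanVariance X (f a).toMeasure (m a) (v a)) :
    HasMeanVariance X (P.bind f).toMeasure (∫ a, m a ∂P.toMeasure)
      (∫ a, v a ∂P.toMeasure + Var[m; P.toMeasure]) := by
  have hsq (a : α) : Integrable (X ^ 2) (f a).toMeasure :=
    (memLp_two_iff_integrable_sq .of_discrete).1 (h a).1
  have hint (a : α) : Integrable X (f a).toMeasure := (h a).1.integrable one_le_two
  have hsq_eq (a : α) : ∫ b, (X ^ 2) b ∂(f a).toMeasure = v a + m a ^ 2 := by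
    rw [← (h a).2.2, ← (h a).2.1, variance_eq_sub (h a).1]
    ring
  have hmemLp : MemLp X 2 (P.bind f).toMeasure := by
    rw [memLp_two_iff_integrable_sq .of_discrete, PMF.toMeasure_bind_eq_sum]
    exact integrable_finsetSum_measure.2 fun a _ => (hsq a).smul_measure (P.apply_ne_top a)
  have hmean : ∫ b, X b ∂(P.bind f).toMeasure = ∫ a, m a ∂P.toMeasure := by
    rw [P.integral_bind f hint]
    exact integral_congr_ae (.of_forall fun a => (h a).2.1)
  refine ⟨hmemLp, hmean, ?_⟩
  rw [variance_eq_sub hmemLp, variance_eq_sub .of_discrete, hmean, P.integral_bind f hsq,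
    integral_congr_ae (.of_forall hsq_eq), integral_add .of_finite .of_finite]
  simp only [Pi.pow_apply]
  ring

theorem HasMeanVariance.binomial_bind {q : NNReal} (hq : q ≤ 1) {n : ℕ}
    {f : Fin (n + 1) → PMF β} {t s V : ℝ}
    (h : ∀ i : Fin (n + 1), HasMeanVariance X (f i).toMeasure (t + s * i) V) :
    HasMeanVariance X ((PMF.binomial q hq n).bind f).toMeasure (t + s * (n * q))
      (V + s ^ 2 * (n * q * (1 - q))) := by
  refine (HasMeanVariance.pmf_bind h).of_eq ?_ ?_
  · rw [integral_add (integrable_const t) .of_finite, integral_const_mul,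
      PMF.integral_binomial_val]
    simp
  · rw [integral_const, variance_const_add .of_discrete, variance_const_mul,
      PMF.variance_binomial_val]
    simp

end

/-- In the noisy ordered pairwise comparison model with parameters
`k ∈ ℕ` and `p ∈ [0, 1]`, the variance of `S = X_i − X_j` equals
`kp(1 − p)(3 + 4p²)`. -/
theorem variance_S (k : ℕ) (p : ℝ) (hp0 : 0 ≤ p) (hp1 : p ≤ 1) :
    variance (fun ω : ℕ × ℕ => ((ω.1 : ℕ) : ℝ) - ((ω.2 : ℕ) : ℝ))
        (noisyPair k p hp0 hp1).toMeasure
      = k * p * (1 - p) * (3 + 4 * p ^ 2) := by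
  have hq : (p.toNNReal : ℝ) = p := Real.coe_toNNReal p hp0
  have hq' : ((1 - p.toNNReal : NNReal) : ℝ) = 1 - p := by
    rw [NNReal.coe_sub (Real.toNNReal_le_one.mpr hp1), hq, NNReal.coe_one]
  simp only [noisyPair, bind_pure_comp, PMF.monad_map_eq_map, PMF.map_comp, Function.comp_def]
  refine (HasMeanVariance.binomial_bind _ (t := -(k * p)) (s := 2 * p)
    (V := 3 * k * p * (1 - p)) fun x => ?_).2.2.trans (by rw [hq]; ring)
  have hx : ((k - x : ℕ) : ℝ) = k - x := Nat.cast_sub x.is_le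
  refine (HasMeanVariance.binomial_bind _ (t := x - (k - x) * p - x * (1 - p) - k * p) (s := 1)
    (V := 2 * k * p * (1 - p)) fun b₁ => ?_).of_eq (by rw [hq]; ring) (by rw [hq]; ring)
  refine (HasMeanVariance.binomial_bind _ (t := b₁ + x - (k - x) * p - x * (1 - p)) (s := -1)
    (V := k * p * (1 - p)) fun b₂ => ?_).of_eq (by rw [hq]; ring) (by rw [hq]; ring)
  refine (HasMeanVariance.binomial_bind _ (t := b₁ + x - b₂ - (k - x) * p) (s := -1)
    (V := (k - x) * p * (1 - p)) fun c => ?_).of_eq (by rw [hq']; ring) (by rw [hq']; ring)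
  refine (HasMeanVariance.binomial_bind _ (t := b₁ + x - b₂ - c) (s := -1) (V := 0)
    fun d => ?_).of_eq (by rw [hq, hx]; ring) (by rw [hq, hx]; ring)
  exact HasMeanVariance.pmf_pure _ |>.of_eq (by push_cast; ring) rfl
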